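/- arXiv:1410.2194 — 3 statements merged into one kernel-verified Lean document; each statement's English description precedes it below -/
import Mathlib

section
/- For every finite semigroup S, the quotient semigroup S/η* is Mal'cev nilpotent. -/
/-! Common definitions: Mal'cev nilpotency, the relations η_n, η, the congruence η*,
Rees matrix semigroups (with and without zero), regularity, CS-diagonality,
the row relation ~, ideals, principal series and Rees factor isomorphisms. -/

/-- The pair `(λ_n, ρ_n)` of Mal'cev words in a monoid, with `λ₀ = x`, `ρ₀ = y`,
`λ_{k+1} = λ_k * z (k+1) * ρ_k` and `ρ_{k+1} = ρ_k * z (k+1) * λ_k`. -/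
def malcev {M : Type*} [Monoid M] (x y : M) (z : ℕ → M) : ℕ → M × M
  | 0 => (x, y)
  | k + 1 =>
      ((malcev x y z k).1 * z (k + 1) * (malcev x y z k).2,
       (malcev x y z k).2 * z (k + 1) * (malcev x y z k).1)

/-- A semigroup `S` is Mal'cev nilpotent if for some positive `n`,
`λ_n(a,b,c₁,…,c_n) = ρ_n(a,b,c₁,…,c_n)` for all `a b ∈ S` and all `cᵢ ∈ S¹`,
where `S¹ = WithOne S`. -/
def MalcevNilpotent (S : Type*) [Semigroup S] : Prop :=
  ∃ n : ℕ, 0 < n ∧ ∀ (a b : S) (z : ℕ → WithOne S),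
    (malcev (a : WithOne S) (b : WithOne S) z n).1 =
    (malcev (a : WithOne S) (b : WithOne S) z n).2

/-- The relation `η_n` on a semigroup `S`: `η₁` is the diagonal, and for `n > 1`,
`x η_n y` iff there are `z₁, …, z_n ∈ S¹` with `x = λ_n(x,y,z₁,…,z_n)` and
`y = ρ_n(x,y,z₁,…,z_n)`. -/
def etaN (S : Type*) [Semigroup S] (n : ℕ) (x y : S) : Prop :=
  (n = 1 ∧ x = y) ∨
  (1 < n ∧ ∃ z : ℕ → WithOne S,
    (x : WithOne S) = (malcev (x : WithOne S) (y : WithOne S) z n).1 ∧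
    (y : WithOne S) = (malcev (x : WithOne S) (y : WithOne S) z n).2)

/-- `η`, the transitive closure of the union of the relations `η_n`, `n ≥ 1`. -/
def eta (S : Type*) [Semigroup S] : S → S → Prop :=
  Relation.TransGen (fun x y => ∃ n, 1 ≤ n ∧ etaN S n x y)

/-- `η*`, the smallest congruence on `S` containing `η`. -/
def etaStar (S : Type*) [Semigroup S] : Con S :=
  conGen (eta S)

/-- A semigroup is an inverse semigroup if every element has exactly one inverse. -/
def IsInverseSemigroup (S : Type*) [Semigroup S] : Prop :=
  ∀ x : S, ∃! y : S, x * y * x = x ∧ y * x * y = y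

/-- A semigroup is completely regular if every element lies in a subgroup:
for every `a` there is `b` with `aba = a`, `ab = ba` and `bab = b`. -/
def IsCompletelyRegular (S : Type*) [Semigroup S] : Prop :=
  ∀ a : S, ∃ b : S, a * b * a = a ∧ a * b = b * a ∧ b * a * b = b

/-- A (possibly empty) two-sided ideal of a semigroup. -/
def IsIdeal (S : Type*) [Semigroup S] (I : Set S) : Prop :=
  ∀ s : S, ∀ x ∈ I, s * x ∈ I ∧ x * s ∈ I

/-- The Rees matrix semigroup `M⁰(G, n, m; P)` with zero `theta`; the sandwich
matrix entry `P j i : Option G` is `none` when the entry is `θ`. -/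
inductive ReesMatrix (G : Type*) (n m : ℕ) (P : Fin m → Fin n → Option G) where
  | theta : ReesMatrix G n m P
  | elem (g : G) (i : Fin n) (j : Fin m) : ReesMatrix G n m P

namespace ReesMatrix

variable {G : Type*} [Group G] {n m : ℕ} {P : Fin m → Fin n → Option G}

/-- Multiplication: `(g;i,j)(h;k,l) = (g p_{j,k} h; i, l)` if `p_{j,k} ≠ θ`,
and all other products are `θ`. -/
def mul : ReesMatrix G n m P → ReesMatrix G n m P → ReesMatrix G n m P
  | elem g i j, elem h k l =>
      match P j k with
      | some p => elem (g * p * h) i l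
      | none => theta
  | _, _ => theta

instance : Semigroup (ReesMatrix G n m P) where
  mul := mul
  mul_assoc a b c := by
    show mul (mul a b) c = mul a (mul b c)
    rcases a with _ | ⟨g, i, j⟩ <;> rcases b with _ | ⟨h, k, l⟩ <;>
      rcases c with _ | ⟨f, r, s⟩
    all_goals try rfl
    · rcases hjk : P j k with _ | p <;> simp [mul, hjk]
    · rcases hjk : P j k with _ | p <;> rcases hlr : P l r with _ | q <;>
        simp [mul, hjk, hlr, mul_assoc]

theorem mul_def (a b : ReesMatrix G n m P) : a * b = mul a b := rfl

instance [Finite G] : Finite (ReesMatrix G n m P) := by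
  have := Fintype.ofFinite G
  exact Finite.of_surjective
    (fun x : Option (G × Fin n × Fin m) =>
      match x with
      | none => (theta : ReesMatrix G n m P)
      | some (g, i, j) => elem g i j)
    (by rintro (_ | ⟨g, i, j⟩)
        · exact ⟨none, rfl⟩
        · exact ⟨some (g, i, j), rfl⟩)

end ReesMatrix

/-- `P` is regular: every row and every column of the sandwich matrix has a
nonzero entry. -/
def IsRegularSandwich {G : Type*} {n m : ℕ} (P : Fin m → Fin n → Option G) : Prop :=
  (∀ i : Fin n, ∃ j : Fin m, P j i ≠ none) ∧ (∀ j : Fin m, ∃ i : Fin n, P j i ≠ none)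

/-- `P` is CS-diagonal: whenever `p_{r,t}`, `p_{r',t}` and `p_{r,t'}` are all
nonzero, so is `p_{r',t'}`. -/
def IsCSDiagonal {G : Type*} {n m : ℕ} (P : Fin m → Fin n → Option G) : Prop :=
  ∀ (r r' : Fin m) (t t' : Fin n),
    P r t ≠ none → P r' t ≠ none → P r t' ≠ none → P r' t' ≠ none

/-- The relation `~` on rows: `i ~ i'` iff some column `j` has `p_{j,i} ≠ θ`
and `p_{j,i'} ≠ θ`. -/
def rowRel {G : Type*} {n m : ℕ} (P : Fin m → Fin n → Option G) (i i' : Fin n) : Prop :=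
  ∃ j : Fin m, P j i ≠ none ∧ P j i' ≠ none

/-- The completely simple Rees matrix semigroup `M(G, n, m; P)` (without zero),
all sandwich entries lying in `G`. -/
inductive ReesMatrixCS (G : Type*) (n m : ℕ) (P : Fin m → Fin n → G) where
  | elem (g : G) (i : Fin n) (j : Fin m) : ReesMatrixCS G n m P

namespace ReesMatrixCS

variable {G : Type*} [Group G] {n m : ℕ} {P : Fin m → Fin n → G}

instance : Semigroup (ReesMatrixCS G n m P) where
  mul a b := match a, b with
    | elem g i j, elem h k l => elem (g * P j k * h) i l
  mul_assoc a b c := by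
    rcases a with ⟨g, i, j⟩; rcases b with ⟨h, k, l⟩; rcases c with ⟨f, r, s⟩
    show elem _ _ _ = elem _ _ _
    simp [mul_assoc]

instance [Finite G] : Finite (ReesMatrixCS G n m P) := by
  have := Fintype.ofFinite G
  exact Finite.of_surjective
    (fun x : G × Fin n × Fin m => elem x.1 x.2.1 x.2.2)
    (by rintro ⟨g, i, j⟩; exact ⟨(g, i, j), rfl⟩)

end ReesMatrixCS

/-- A principal series of a finite semigroup `S`:
`S = C 1 ⊃ C 2 ⊃ … ⊃ C o ⊃ C (o+1) = ∅`, each `C p` an ideal of `S` with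
no ideal of `S` strictly between consecutive terms. -/
structure PrincipalSeries (S : Type*) [Semigroup S] where
  o : ℕ
  ho : 1 ≤ o
  C : ℕ → Set S
  first : C 1 = Set.univ
  last : C (o + 1) = ∅
  isIdeal : ∀ p, 1 ≤ p → p ≤ o → IsIdeal S (C p)
  strict : ∀ p, 1 ≤ p → p ≤ o → C (p + 1) ⊂ C p
  max : ∀ p, 1 ≤ p → p ≤ o → ∀ I : Set S, IsIdeal S I →
    C (p + 1) ⊆ I → I ⊆ C p → I = C (p + 1) ∨ I = C p

/-- `f` realises the Rees factor `A/B` (the Rees quotient of `A` by the ideal `B`;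
if `B = ∅` the factor is `A` itself) as the Rees matrix semigroup with zero
`M⁰(H, n', m'; Q)`. -/
def IsReesFactorM0 {S : Type*} [Semigroup S] (A B : Set S)
    {H : Type*} [Group H] {n' m' : ℕ} (Q : Fin m' → Fin n' → Option H)
    (f : S → ReesMatrix H n' m' Q) : Prop :=
  (∀ x ∈ A, ∀ y ∈ A, f (x * y) = f x * f y) ∧
  ((B = ∅ ∧ Set.BijOn f A Set.univ) ∨
   (B ≠ ∅ ∧ (∀ x ∈ B, f x = ReesMatrix.theta) ∧
     (∀ x ∈ A \ B, f x ≠ ReesMatrix.theta) ∧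
     Set.InjOn f (A \ B) ∧
     (∀ w : ReesMatrix H n' m' Q, w ≠ ReesMatrix.theta → ∃ x ∈ A \ B, f x = w)))

/-- `f` realises `A` as the completely simple Rees matrix semigroup
`M(H, n', m'; Q)` (without zero). -/
def IsReesFactorCS {S : Type*} [Semigroup S] (A : Set S)
    {H : Type*} [Group H] {n' m' : ℕ} (Q : Fin m' → Fin n' → H)
    (f : S → ReesMatrixCS H n' m' Q) : Prop :=
  (∀ x ∈ A, ∀ y ∈ A, f (x * y) = f x * f y) ∧ Set.BijOn f A Set.univ

/-! If `S/η*` were not Mal'cev nilpotent, then, since the pairs `(λ_k, ρ_k)` of a finite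
monoid repeat within `|S¹ × S¹|` steps, some pair `x ≠ y` of `S/η*` would be fixed by a block
of `m ≥ 1` Mal'cev steps. Lift `x`, `y` and the block to `S¹`: the lifted block acts on the
finite set `S¹ × S¹`, so the orbit of the lifted pair reaches a periodic point `(u, v)` lying
over `(x, y)`. Running twice through its period (once might be a single step) gives `u η_n v`
with `n > 1`, so `u` and `v`, hence `x` and `y`, are identified in `S/η*`. -/

open Function

instance WithOne.instFinite {α : Type*} [Finite α] : Finite (WithOne α) :=
  inferInstanceAs (Finite (Option α))

theorem WithOne.mapMulHom_surjective {α β : Type*} [Mul α] [Mul β] {f : α →ₙ* β}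
    (hf : Surjective f) : Surjective (WithOne.mapMulHom f) := by
  intro b
  induction b with
  | one => exact ⟨1, map_one _⟩
  | coe b =>
    obtain ⟨a, rfl⟩ := hf b
    exact ⟨a, WithOne.mapMulHom_coe f a⟩

theorem Function.exists_isPeriodicPt_iterate {α : Type*} [Finite α] (f : α → α) (x : α) :
    ∃ p d, 0 < d ∧ IsPeriodicPt f d (f^[p] x) := by
  obtain ⟨i, j, hij, heq⟩ := Finite.exists_ne_map_eq_of_infinite fun n => f^[n] x
  wlog hlt : i < j generalizing i j
  · exact this j i hij.symm heq.symm (by omega)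
  refine ⟨i, j - i, by omega, ?_⟩
  rw [IsPeriodicPt, IsFixedPt, ← iterate_add_apply, Nat.sub_add_cancel hlt.le]
  exact heq.symm

section Malcev

variable {M : Type*} [Monoid M]

theorem malcev_add (x y : M) (z : ℕ → M) (k j : ℕ) :
    malcev x y z (k + j) =
      malcev (malcev x y z k).1 (malcev x y z k).2 (fun i => z (k + i)) j := by
  induction j with
  | zero => rfl
  | succ j ih => rw [← add_assoc, malcev, malcev, ih]; rfl

theorem malcev_congr (x y : M) {z z' : ℕ → M} {n : ℕ}
    (h : ∀ i, 1 ≤ i → i ≤ n → z i = z' i) : malcev x y z n = malcev x y z' n := by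
  induction n with
  | zero => rfl
  | succ n ih =>
    rw [malcev, malcev, ih fun i h₁ h₂ => h i h₁ (by omega), h (n + 1) (by omega) le_rfl]

theorem malcev_map {N : Type*} [Monoid N] (f : M →* N) (x y : M) (z : ℕ → M) (n : ℕ) :
    malcev (f x) (f y) (f ∘ z) n = Prod.map f f (malcev x y z n) := by
  induction n with
  | zero => rfl
  | succ n ih =>
    simp only [malcev, ih, Prod.map_apply, Prod.map_fst, Prod.map_snd, map_mul, comp_apply]

theorem malcev_fst_eq_snd_of_le {x y : M} {z : ℕ → M} {k n : ℕ} (hkn : k ≤ n)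
    (h : (malcev x y z k).1 = (malcev x y z k).2) :
    (malcev x y z n).1 = (malcev x y z n).2 := by
  induction n, hkn using Nat.le_induction with
  | base => exact h
  | succ n _ ih => simp only [malcev, ih]

theorem exists_lt_le_card_malcev_eq [Fintype M] (x y : M) (z : ℕ → M) :
    ∃ k l, k < l ∧ l ≤ Fintype.card (M × M) ∧ malcev x y z k = malcev x y z l := by
  obtain ⟨i, j, hij, heq⟩ := Fintype.exists_ne_map_eq_of_card_lt
    (fun i : Fin (Fintype.card (M × M) + 1) => malcev x y z i) (by simp)
  rcases Fin.lt_or_lt_of_ne hij with h | h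
  · exact ⟨i, j, h, Nat.lt_succ_iff.mp j.isLt, heq⟩
  · exact ⟨j, i, h, Nat.lt_succ_iff.mp i.isLt, heq.symm⟩

theorem exists_periodic_malcev_eq (x y : M) (z : ℕ → M) (m : ℕ) :
    ∃ z' : ℕ → M, Periodic z' m ∧ malcev x y z' m = malcev x y z m := by
  -- the `m`-periodic extension of `z` restricted to `[1, m]`; the `+ m` keeps it periodic at `0`
  refine ⟨fun i => z ((i + m - 1) % m + 1), fun i => ?_, malcev_congr x y fun i h₁ h₂ => ?_⟩
  · simp only [show i + m + m - 1 = i + m - 1 + m by omega, Nat.add_mod_right]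
  · rw [show i + m - 1 = i - 1 + m by omega, Nat.add_mod_right, Nat.mod_eq_of_lt (by omega),
      Nat.sub_add_cancel h₁]

theorem malcev_mul_eq_iterate {z : ℕ → M} {m : ℕ} (hz : Periodic z m) (x y : M) (r : ℕ) :
    malcev x y z (r * m) = (fun p : M × M => malcev p.1 p.2 z m)^[r] (x, y) := by
  induction r with
  | zero => rw [zero_mul]; rfl
  | succ r ih =>
    have hshift : (fun i => z (r * m + i)) = z := funext fun i => by
      rw [add_comm]; exact hz.nat_mul r i
    rw [Nat.succ_mul, malcev_add, hshift, iterate_succ_apply', ← ih]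

theorem exists_malcev_eq_self_of_surjective [Finite M] {N : Type*} [Monoid N] {f : M →* N}
    (hf : Surjective f) {x y : N} {z : ℕ → N} {m : ℕ} (hm : 0 < m) (hz : Periodic z m)
    (h : malcev x y z m = (x, y)) :
    ∃ u v : M, f u = x ∧ f v = y ∧
      ∃ (w : ℕ → M) (n : ℕ), 1 < n ∧ malcev u v w n = (u, v) := by
  obtain ⟨u, rfl⟩ := hf x
  obtain ⟨v, rfl⟩ := hf y
  set w := surjInv hf ∘ z
  have hfw : f ∘ w = z := funext fun i => surjInv_eq hf (z i)
  set F := fun p : M × M => malcev p.1 p.2 w m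
  set G := fun p : N × N => malcev p.1 p.2 z m
  have hFG : Semiconj (Prod.map f f) F G := fun p => by
    simp only [F, G, Prod.map_fst, Prod.map_snd, ← malcev_map, hfw]
  obtain ⟨p, d, hd, hper⟩ := exists_isPeriodicPt_iterate F (u, v)
  have himage : Prod.map f f (F^[p] (u, v)) = (f u, f v) :=
    (hFG.iterate_right p (u, v)).trans (iterate_fixed h p)
  refine ⟨(F^[p] (u, v)).1, (F^[p] (u, v)).2, congrArg Prod.fst himage,
    congrArg Prod.snd himage, w, 2 * d * m, ?_, ?_⟩
  · have : 0 < d * m := Nat.mul_pos hd hm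
    rw [mul_assoc]; omega
  · rw [malcev_mul_eq_iterate (hz.comp (surjInv hf))]
    exact (hper.const_mul 2).eq

end Malcev

theorem exists_malcev_coe_eq {S : Type*} [Semigroup S] (a b : S) (z : ℕ → WithOne S) (n : ℕ) :
    ∃ x y : S, malcev (a : WithOne S) b z n = ((x : WithOne S), (y : WithOne S)) := by
  induction n with
  | zero => exact ⟨a, b, rfl⟩
  | succ n ih =>
    obtain ⟨x, y, hxy⟩ := ih
    rw [malcev, hxy]
    induction z (n + 1) with
    | one => exact ⟨x * y, y * x, by simp⟩
    | coe c => exact ⟨x * c * y, y * c * x, by simp⟩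

theorem malcevNilpotent_of_forall_malcev_eq_self {T : Type*} [Semigroup T] [Finite T]
    (h : ∀ (x y : T) (z : ℕ → WithOne T) (m : ℕ), 0 < m →
      malcev (x : WithOne T) y z m = ((x : WithOne T), (y : WithOne T)) → x = y) :
    MalcevNilpotent T := by
  have := Fintype.ofFinite (WithOne T)
  refine ⟨Fintype.card (WithOne T × WithOne T), Fintype.card_pos, fun a b z => ?_⟩
  obtain ⟨k, l, hkl, hl, hkl_eq⟩ := exists_lt_le_card_malcev_eq (a : WithOne T) b z
  obtain ⟨x, y, hxy⟩ := exists_malcev_coe_eq a b z k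
  refine malcev_fst_eq_snd_of_le (hkl.le.trans hl) ?_
  have hfix : malcev (x : WithOne T) y (fun i => z (k + i)) (l - k) = (↑x, ↑y) := by
    have := malcev_add (a : WithOne T) b z k (l - k)
    rw [Nat.add_sub_cancel' hkl.le, ← hkl_eq, hxy] at this
    exact this.symm
  rw [hxy, h x y _ (l - k) (by omega) hfix]

theorem etaStar_quotient_eq_of_malcev_eq_self {S : Type*} [Semigroup S] [Finite S]
    {x y : (etaStar S).Quotient} {z : ℕ → WithOne (etaStar S).Quotient} {m : ℕ} (hm : 0 < m)
    (h : malcev (x : WithOne (etaStar S).Quotient) y z m = ((x : WithOne _), (y : WithOne _))) :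
    x = y := by
  obtain ⟨z', hz', hz'_eq⟩ := exists_periodic_malcev_eq (x : WithOne (etaStar S).Quotient) y z m
  obtain ⟨u, v, hu, hv, w, n, hn, huv⟩ :=
    exists_malcev_eq_self_of_surjective (f := WithOne.mapMulHom (etaStar S).mkMulHom)
      (WithOne.mapMulHom_surjective Quotient.mk_surjective) hm hz' (hz'_eq.trans h)
  obtain ⟨u, rfl⟩ := WithOne.ne_one_iff_exists.mp (by rintro rfl; simp at hu : u ≠ 1)
  obtain ⟨v, rfl⟩ := WithOne.ne_one_iff_exists.mp (by rintro rfl; simp at hv : v ≠ 1)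
  have hη : etaN S n u v :=
    Or.inr ⟨hn, w, (congrArg Prod.fst huv).symm, (congrArg Prod.snd huv).symm⟩
  have hrel : etaStar S u v := ConGen.Rel.of _ _ (Relation.TransGen.single ⟨n, hn.le, hη⟩)
  rw [WithOne.mapMulHom_coe] at hu hv
  rw [← WithOne.coe_inj.mp hu, ← WithOne.coe_inj.mp hv]
  exact (etaStar S).eq.mpr hrel

/-- For every finite semigroup `S`, the quotient `S/η*` is
Mal'cev nilpotent. -/
theorem malcevNilpotent_quotient_etaStar (S : Type*) [Semigroup S] [Finite S] :
    MalcevNilpotent (etaStar S).Quotient :=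
  have : Finite (etaStar S).Quotient := Quotient.finite _
  malcevNilpotent_of_forall_malcev_eq_self fun _ _ _ _ hm h =>
    etaStar_quotient_eq_of_malcev_eq_self hm h
end

section
/- Let M = M⁰(G,n,m;P) be a finite regular Rees matrix semigroup which is CS-diagonal. Then the quotient semigroup M/η* is an inverse semigroup. -/
/-!
`M` is a regular semigroup, so `M/η*` is regular, and a regular semigroup is inverse as soon as
its idempotents commute. By Lallement's lemma every idempotent of `M/η*` is the class of an
idempotent of `M`, so it suffices that `ef η* fe` for idempotents `e = (p_{j,i}⁻¹; i, j)` and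
`f = (p_{l,k}⁻¹; k, l)` of `M`. CS-diagonality makes `ef` and `fe` vanish together; when they do
not, they are related already by `η₂`, with explicit Mal'cev witnesses.
-/

def IsRegularSemigroup (S : Type*) [Semigroup S] : Prop :=
  ∀ x : S, ∃ y : S, x * y * x = x ∧ y * x * y = y

namespace IsRegularSemigroup

variable {S : Type*} [Semigroup S]

theorem quotient (hS : IsRegularSemigroup S) (c : Con S) : IsRegularSemigroup c.Quotient := by
  intro X
  induction X using Con.induction_on with
  | H x =>
    obtain ⟨y, hxy, hyx⟩ := hS x
    exact ⟨y, by rw [← Con.coe_mul, ← Con.coe_mul, hxy], by rw [← Con.coe_mul, ← Con.coe_mul, hyx]⟩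

theorem exists_isIdempotentElem_mk_eq (hS : IsRegularSemigroup S) {c : Con S} {U : c.Quotient}
    (hU : IsIdempotentElem U) : ∃ e : S, IsIdempotentElem e ∧ (e : c.Quotient) = U := by
  induction U using Con.induction_on with
  | H a =>
    obtain ⟨x, hx, hx'⟩ := hS (a * a)
    have haa : ((a * a : S) : c.Quotient) = a := hU
    refine ⟨a * x * a, ?_, ?_⟩
    · calc a * x * a * (a * x * a) = a * (x * (a * a) * x) * a := by simp only [mul_assoc]
        _ = a * x * a := by rw [hx']
    · calc ((a * x * a : S) : c.Quotient) = (a * a : S) * (x : c.Quotient) * (a * a : S) := by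
            rw [haa]; rfl
        _ = a := by rw [← Con.coe_mul, ← Con.coe_mul, hx, haa]

theorem isInverseSemigroup (hS : IsRegularSemigroup S)
    (hcomm : ∀ e f : S, IsIdempotentElem e → IsIdempotentElem f → e * f = f * e) :
    IsInverseSemigroup S := by
  intro x
  obtain ⟨y, hxy, hyx⟩ := hS x
  refine ⟨y, ⟨hxy, hyx⟩, fun z ⟨hxz, hzx⟩ => ?_⟩
  have idem_right {u v : S} (h : u * v * u = u) : IsIdempotentElem (u * v) := by
    simp only [IsIdempotentElem, ← mul_assoc, h]
  have idem_left {u v : S} (h : u * v * u = u) : IsIdempotentElem (v * u) := by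
    simp only [IsIdempotentElem, mul_assoc] at h ⊢; rw [h]
  have hz : z = y * x * z :=
    calc z = z * (x * y * x) * z := by rw [hxy, hzx]
      _ = (z * x) * (y * x) * z := by simp only [mul_assoc]
      _ = (y * x) * (z * x) * z := by rw [hcomm _ _ (idem_left hxz) (idem_left hxy)]
      _ = y * x * z := by simp only [mul_assoc, hzx]
  have hy : y = y * x * z :=
    calc y = y * (x * z * x) * y := by rw [hxz, hyx]
      _ = y * ((x * z) * (x * y)) := by simp only [mul_assoc]
      _ = y * ((x * y) * (x * z)) := by rw [hcomm _ _ (idem_right hxz) (idem_right hxy)]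
      _ = y * x * z := by simp only [← mul_assoc, hyx]
  rw [hz, ← hy]

end IsRegularSemigroup

theorem eta_of_eq_malcev_two {S : Type*} [Semigroup S] {x y : S} (z₁ z₂ : S)
    (hx : x = x * z₁ * y * z₂ * (y * z₁ * x)) (hy : y = y * z₁ * x * z₂ * (x * z₁ * y)) :
    eta S x y := by
  refine .single ⟨2, one_le_two, .inr ⟨one_lt_two, fun k => if k = 1 then z₁ else z₂, ?_, ?_⟩⟩
  · simpa [malcev, ← WithOne.coe_mul] using hx
  · simpa [malcev, ← WithOne.coe_mul] using hy

theorem IsCSDiagonal.eq_none_iff {G : Type*} {n m : ℕ} {P : Fin m → Fin n → Option G}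
    (hP : IsCSDiagonal P) {i k : Fin n} {j l : Fin m} (hji : P j i ≠ none) (hlk : P l k ≠ none) :
    P j k = none ↔ P l i = none :=
  not_iff_not.mp ⟨fun hjk => hP j l k i hjk hlk hji, fun hli => hP l j i k hli hji hlk⟩

namespace ReesMatrix

variable {G : Type*} [Group G] {n m : ℕ} {P : Fin m → Fin n → Option G}

@[simp]
theorem theta_mul (x : ReesMatrix G n m P) : (theta : ReesMatrix G n m P) * x = theta := by
  cases x <;> rfl

@[simp]
theorem mul_theta (x : ReesMatrix G n m P) : x * (theta : ReesMatrix G n m P) = theta := by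
  cases x <;> rfl

theorem elem_mul_elem_of_eq_some {i k : Fin n} {j l : Fin m} {g h p : G} (hp : P j k = some p) :
    (elem g i j : ReesMatrix G n m P) * elem h k l = elem (g * p * h) i l := by
  simp [mul_def, mul, hp]

theorem elem_mul_elem_of_eq_none {i k : Fin n} {j l : Fin m} {g h : G} (hp : P j k = none) :
    (elem g i j : ReesMatrix G n m P) * elem h k l = theta := by
  simp [mul_def, mul, hp]

theorem isRegularSemigroup (hP : IsRegularSandwich P) : IsRegularSemigroup (ReesMatrix G n m P)
  | theta => ⟨theta, rfl, rfl⟩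
  | elem g i j => by
    obtain ⟨k, hk⟩ := hP.2 j
    obtain ⟨l, hl⟩ := hP.1 i
    obtain ⟨u, hu⟩ := Option.ne_none_iff_exists'.mp hk
    obtain ⟨v, hv⟩ := Option.ne_none_iff_exists'.mp hl
    refine ⟨elem (u⁻¹ * g⁻¹ * v⁻¹) k l, ?_, ?_⟩ <;>
      simp only [elem_mul_elem_of_eq_some hu, elem_mul_elem_of_eq_some hv, elem.injEq, and_true] <;>
      group

theorem isIdempotentElem_iff {e : ReesMatrix G n m P} :
    IsIdempotentElem e ↔ e = theta ∨ ∃ i j p, P j i = some p ∧ e = elem p⁻¹ i j := by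
  constructor
  · intro he
    cases e with
    | theta => exact .inl rfl
    | elem g i j =>
      rcases hp : P j i with _ | p
      · simp [IsIdempotentElem, elem_mul_elem_of_eq_none hp] at he
      · have hg : g * p * g = 1 * g := by
          simpa [IsIdempotentElem, elem_mul_elem_of_eq_some hp] using he
        exact .inr ⟨i, j, p, hp, by rw [eq_inv_of_mul_eq_one_left (mul_right_cancel hg)]⟩
  · rintro (rfl | ⟨i, j, p, hp, rfl⟩)
    · exact theta_mul _
    · simp [IsIdempotentElem, elem_mul_elem_of_eq_some hp]

theorem eta_mul_comm_of_eq_some {i k : Fin n} {j l : Fin m} {p q r s : G}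
    (hp : P j i = some p) (hq : P l k = some q) (hr : P j k = some r) (hs : P l i = some s) :
    eta (ReesMatrix G n m P) (elem p⁻¹ i j * elem q⁻¹ k l) (elem q⁻¹ k l * elem p⁻¹ i j) := by
  simp only [elem_mul_elem_of_eq_some hr, elem_mul_elem_of_eq_some hs]
  refine eta_of_eq_malcev_two (elem r⁻¹ k j) (elem (r⁻¹ * p * s⁻¹ * q * r⁻¹ * p * s⁻¹) k l)
    ?_ ?_ <;>
    simp only [elem_mul_elem_of_eq_some hp, elem_mul_elem_of_eq_some hq,
      elem_mul_elem_of_eq_some hr, elem_mul_elem_of_eq_some hs, elem.injEq, and_true] <;>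
    group

theorem etaStar_mul_comm_of_isIdempotentElem (hP : IsCSDiagonal P) {e f : ReesMatrix G n m P}
    (he : IsIdempotentElem e) (hf : IsIdempotentElem f) : etaStar _ (e * f) (f * e) := by
  rcases isIdempotentElem_iff.mp he with rfl | ⟨i, j, p, hp, rfl⟩
  · simpa using (etaStar _).refl theta
  rcases isIdempotentElem_iff.mp hf with rfl | ⟨k, l, q, hq, rfl⟩
  · simpa using (etaStar _).refl theta
  have hr_iff := hP.eq_none_iff (Option.ne_none_iff_exists'.mpr ⟨p, hp⟩)
    (Option.ne_none_iff_exists'.mpr ⟨q, hq⟩)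
  rcases hr : P j k with _ | r
  · rw [elem_mul_elem_of_eq_none hr, elem_mul_elem_of_eq_none (hr_iff.mp hr)]
    exact (etaStar _).refl _
  · obtain ⟨s, hs⟩ := Option.ne_none_iff_exists'.mp (mt hr_iff.mpr (by simp [hr]))
    exact ConGen.Rel.of _ _ (eta_mul_comm_of_eq_some hp hq hr hs)

end ReesMatrix

theorem isInverse_quotient_etaStar_of_csDiagonal_general (G : Type*) [Group G]
    (n m : ℕ) (P : Fin m → Fin n → Option G)
    (hreg : IsRegularSandwich P) (hdiag : IsCSDiagonal P) :
    IsInverseSemigroup (etaStar (ReesMatrix G n m P)).Quotient := by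
  have hM := ReesMatrix.isRegularSemigroup hreg
  refine (hM.quotient _).isInverseSemigroup fun U V hU hV => ?_
  obtain ⟨e, he, rfl⟩ := hM.exists_isIdempotentElem_mk_eq hU
  obtain ⟨f, hf, rfl⟩ := hM.exists_isIdempotentElem_mk_eq hV
  exact (Con.eq _).mpr (ReesMatrix.etaStar_mul_comm_of_isIdempotentElem hdiag he hf)

/-- If a finite regular Rees matrix semigroup `M⁰(G,n,m;P)` is
CS-diagonal, then `M/η*` is an inverse semigroup. -/
theorem isInverse_quotient_etaStar_of_csDiagonal (G : Type*) [Group G] [Finite G]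
    (n m : ℕ) (hn : 0 < n) (hm : 0 < m) (P : Fin m → Fin n → Option G)
    (hreg : IsRegularSandwich P) (hdiag : IsCSDiagonal P) :
    IsInverseSemigroup (etaStar (ReesMatrix G n m P)).Quotient :=
  isInverse_quotient_etaStar_of_csDiagonal_general G n m P hreg hdiag
end

section
/- Let S be a finite completely regular semigroup. Then S/η* is a Clifford semigroup: S/η* is completely regular and every element of S/η* has exactly one inverse. -/
/-! `S/η*` is completely regular as a homomorphic image of `S`, and a regular semigroup whose
idempotents commute is inverse. Since `S` is completely regular, every idempotent of `S/η*` is the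
class of an idempotent of `S`. For idempotents `e, f` of `S`, the elements `u = ef` and `v = fe`
lie in subgroups of `S`, and finiteness gives one `n` with `u ^ (n + 2) = u` and `v ^ (n + 2) = v`;
then `u η₂ v`, witnessed by `z₁ = v ^ (n + 1)`, the identity of the group of `v`, and
`z₂ = u ^ (2n) e = u⁻² e`. So idempotents commute in `S/η*`. -/

section Monoid

variable {M : Type*} [Monoid M]

theorem malcev_two (x y : M) (z : ℕ → M) :
    malcev x y z 2 = (x * z 1 * y * z 2 * (y * z 1 * x), y * z 1 * x * z 2 * (x * z 1 * y)) :=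
  rfl

theorem pow_succ_mul_pow_eq_self {a b : M} (haba : a * b * a = a) (hab : Commute a b) (i : ℕ) :
    a ^ (i + 1) * b ^ i = a := by
  induction i with
  | zero => simp
  | succ i ih =>
    calc a ^ (i + 1 + 1) * b ^ (i + 1) = a ^ (i + 1) * b ^ i * (a * b) := by
          rw [pow_succ a (i + 1), pow_succ b i, mul_assoc (a ^ (i + 1)) a,
            ← mul_assoc a, (hab.pow_right i).eq]
          simp only [mul_assoc]
      _ = a := by rw [ih, hab.eq, ← mul_assoc, haba]

theorem exists_pow_add_two_eq_self_of_commute [Finite M] {a b : M} (haba : a * b * a = a)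
    (hab : Commute a b) : ∃ p, a ^ (p + 2) = a := by
  have of_lt : ∀ i j, i < j → a ^ i = a ^ j → ∃ p, a ^ (p + 2) = a := by
    intro i j hij hpow
    obtain ⟨p, rfl⟩ := Nat.exists_eq_add_of_lt hij
    refine ⟨p, ?_⟩
    calc a ^ (p + 2) = a ^ (p + 1) * (a ^ (i + 1) * b ^ i) := by
          rw [pow_succ_mul_pow_eq_self haba hab, pow_succ]
      _ = a ^ (i + p + 1) * a * b ^ i := by
          rw [← mul_assoc, ← pow_add, ← pow_succ,
            show p + 1 + (i + 1) = i + p + 1 + 1 by omega]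
      _ = a := by rw [← hpow, ← pow_succ, pow_succ_mul_pow_eq_self haba hab]
  obtain ⟨i, j, hij, hpow⟩ := Finite.exists_ne_map_eq_of_infinite (a ^ · : ℕ → M)
  rcases hij.lt_or_gt with h | h
  exacts [of_lt i j h hpow, of_lt j i h hpow.symm]

theorem pow_mul_add_one_eq_self {a : M} {p : ℕ} (h : a ^ (p + 1) = a) (c : ℕ) :
    a ^ (p * c + 1) = a := by
  induction c with
  | zero => simp
  | succ c ih => rw [mul_add_one, add_right_comm, pow_add, ih, ← pow_succ', h]

theorem malcev_two_mul_idempotents {e f : M} (he : IsIdempotentElem e)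
    (hf : IsIdempotentElem f) {n : ℕ} (hu : (e * f) ^ (n + 2) = e * f)
    (hv : (f * e) ^ (n + 2) = f * e) :
    malcev (e * f) (f * e)
      (fun i => if i = 1 then (f * e) ^ (n + 1) else (e * f) ^ (2 * n) * e) 2 =
      (e * f, f * e) := by
  set u := e * f with hu_def
  set v := f * e with hv_def
  have hv_z : v ^ (n + 1) * v = v := by rw [← pow_succ, hv]
  have hz_v : v * v ^ (n + 1) = v := by rw [← pow_succ', hv]
  have huv : u * v = u * e := by simp only [hu_def, hv_def, mul_assoc, ← mul_assoc f f, hf.eq]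
  have hvu : v * u = f * u := by simp only [hu_def, hv_def, mul_assoc, ← mul_assoc e e, he.eq]
  have he_u : e * u = u := by rw [hu_def, ← mul_assoc, he.eq]
  have hf_u_e : ∀ m, f * u ^ m * e = v ^ (m + 1) := fun m => by
    have hsc : SemiconjBy f u v := (mul_assoc f e f).symm
    rw [(hsc.pow_right m).eq, mul_assoc, ← pow_succ]
  have hu_cycle : u ^ (2 * n + 3) = u := by
    rw [show 2 * n + 3 = (n + 1) * 2 + 1 by ring]; exact pow_mul_add_one_eq_self hu 2
  have hv_cycle : v ^ (2 * n + 3) = v := by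
    rw [show 2 * n + 3 = (n + 1) * 2 + 1 by ring]; exact pow_mul_add_one_eq_self hv 2
  simp only [malcev_two, if_true, show (2 : ℕ) ≠ 1 by decide, if_false]
  rw [mul_assoc u, hv_z, hz_v, huv, hvu, Prod.mk.injEq]
  constructor
  · calc u * e * (u ^ (2 * n) * e) * (f * u) = u * (e * (u ^ (2 * n) * u)) * u := by
          simp only [hu_def, mul_assoc]
      _ = u := by
          rw [← pow_succ, pow_succ', ← mul_assoc e, he_u, ← pow_succ', ← pow_succ',
            ← pow_succ, hu_cycle]
  · calc f * u * (u ^ (2 * n) * e) * (u * e) = f * (u * u ^ (2 * n) * (e * u)) * e := by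
          simp only [mul_assoc]
      _ = v := by rw [he_u, ← pow_succ', ← pow_succ, hf_u_e, hv_cycle]

end Monoid

section Semigroup

variable {S T : Type*} [Semigroup S] [Semigroup T]

theorem IsCompletelyRegular.exists_pow_add_two_eq_self [Finite S] (h : IsCompletelyRegular S) :
    ∃ n, ∀ a : S, (a : WithOne S) ^ (n + 2) = a := by
  have : Finite (WithOne S) := inferInstanceAs (Finite (Option S))
  have : Fintype S := Fintype.ofFinite S
  have hpow : ∀ a : S, ∃ p, (a : WithOne S) ^ (p + 2) = a := fun a => by
    obtain ⟨b, haba, hab, -⟩ := h a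
    exact exists_pow_add_two_eq_self_of_commute (b := (b : WithOne S)) (by exact_mod_cast haba)
      (by exact_mod_cast hab : (a : WithOne S) * b = b * a)
  choose p hp using hpow
  obtain ⟨n, hn⟩ : ∃ n, ∏ a, (p a + 1) = n + 1 :=
    Nat.exists_eq_add_one.2 (Finset.prod_pos fun a _ => (p a).succ_pos)
  refine ⟨n, fun a => ?_⟩
  obtain ⟨c, hc⟩ : p a + 1 ∣ ∏ b, (p b + 1) := Finset.dvd_prod_of_mem _ (Finset.mem_univ a)
  rw [show n + 2 = (p a + 1) * c + 1 by omega, pow_mul_add_one_eq_self (hp a)]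

theorem IsCompletelyRegular.of_surjective (h : IsCompletelyRegular S) {φ : S →ₙ* T}
    (hφ : Function.Surjective φ) : IsCompletelyRegular T := by
  intro t
  obtain ⟨a, rfl⟩ := hφ t
  obtain ⟨b, haba, hab, hbab⟩ := h a
  exact ⟨φ b, by rw [← map_mul, ← map_mul, haba], by rw [← map_mul, ← map_mul, hab],
    by rw [← map_mul, ← map_mul, hbab]⟩

theorem IsCompletelyRegular.exists_isIdempotentElem_map_eq (h : IsCompletelyRegular S)
    {φ : S →ₙ* T} (hφ : Function.Surjective φ) {t : T} (ht : IsIdempotentElem t) :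
    ∃ e, IsIdempotentElem e ∧ φ e = t := by
  obtain ⟨a, rfl⟩ := hφ t
  obtain ⟨b, haba, hab, -⟩ := h a
  refine ⟨a * b, by rw [IsIdempotentElem, ← mul_assoc, haba], ?_⟩
  calc φ (a * b) = φ (a * a * b) := by rw [map_mul, map_mul, map_mul, ht.eq]
    _ = φ a := by rw [mul_assoc, hab, ← mul_assoc, haba]

theorem isInverseSemigroup_of_commute_idempotents
    (hreg : ∀ x : T, ∃ y, x * y * x = x ∧ y * x * y = y)
    (hcomm : ∀ e f : T, IsIdempotentElem e → IsIdempotentElem f → Commute e f) :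
    IsInverseSemigroup T := by
  have hidem : ∀ {x y : T}, x * y * x = x →
      IsIdempotentElem (x * y) ∧ IsIdempotentElem (y * x) :=
    fun {x y} hxyx => ⟨by rw [IsIdempotentElem, ← mul_assoc, hxyx],
      by rw [IsIdempotentElem, mul_assoc, ← mul_assoc x, hxyx]⟩
  intro x
  obtain ⟨y, hxyx, hyxy⟩ := hreg x
  refine ⟨y, ⟨hxyx, hyxy⟩, fun y' ⟨hxy'x, hy'xy'⟩ => ?_⟩
  have hyx : Commute (y' * x) (y * x) := hcomm _ _ (hidem hxy'x).2 (hidem hxyx).2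
  have hxy : Commute (x * y) (x * y') := hcomm _ _ (hidem hxyx).1 (hidem hxy'x).1
  calc y' = y' * (x * y * x) * y' := by rw [hxyx, hy'xy']
    _ = (y' * x) * (y * x) * y' := by simp only [mul_assoc]
    _ = (y * x) * (y' * x) * y' := by rw [hyx.eq]
    _ = y * x * (y' * x * y') := by simp only [mul_assoc]
    _ = y * (x * y * x) * y' := by rw [hy'xy', hxyx]
    _ = y * (x * y * (x * y')) := by simp only [mul_assoc]
    _ = y * (x * y' * (x * y)) := by rw [hxy.eq]
    _ = y * (x * y' * x) * y := by simp only [mul_assoc]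
    _ = y := by rw [hxy'x, hyxy]

end Semigroup

section Eta

variable {S : Type*} [Semigroup S]

theorem etaStar_of_etaN {n : ℕ} (hn : 1 ≤ n) {x y : S} (h : etaN S n x y) : etaStar S x y :=
  ConGen.Rel.of _ _ (Relation.TransGen.single ⟨n, hn, h⟩)

theorem etaN_two_mul_idempotents {n : ℕ} (hpow : ∀ a : S, (a : WithOne S) ^ (n + 2) = a)
    {e f : S} (he : IsIdempotentElem e) (hf : IsIdempotentElem f) :
    etaN S 2 (e * f) (f * e) := by
  have hmalcev := malcev_two_mul_idempotents (M := WithOne S) (e := e) (f := f)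
    (by exact_mod_cast he.eq : (e : WithOne S) * e = e)
    (by exact_mod_cast hf.eq : (f : WithOne S) * f = f)
    (by exact_mod_cast hpow (e * f)) (by exact_mod_cast hpow (f * e))
  rw [etaN, WithOne.coe_mul, WithOne.coe_mul]
  exact Or.inr ⟨one_lt_two, _, Prod.ext_iff.1 hmalcev.symm⟩

theorem IsCompletelyRegular.commute_idempotents_etaStar [Finite S] (h : IsCompletelyRegular S)
    (s t : (etaStar S).Quotient) (hs : IsIdempotentElem s) (ht : IsIdempotentElem t) :
    Commute s t := by
  have hsurj : Function.Surjective (etaStar S).mkMulHom := Quotient.mk''_surjective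
  obtain ⟨e, he, rfl⟩ := h.exists_isIdempotentElem_map_eq hsurj hs
  obtain ⟨f, hf, rfl⟩ := h.exists_isIdempotentElem_map_eq hsurj ht
  obtain ⟨n, hpow⟩ := h.exists_pow_add_two_eq_self
  rw [Commute, SemiconjBy, ← map_mul, ← map_mul, Con.mkMulHom_apply, Con.mkMulHom_apply, Con.eq]
  exact etaStar_of_etaN one_le_two (etaN_two_mul_idempotents hpow he hf)

end Eta

/-- If `S` is a finite completely regular semigroup, then `S/η*`
is a Clifford semigroup: completely regular and inverse. -/
theorem quotient_etaStar_clifford (S : Type*) [Semigroup S] [Finite S]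
    (h : IsCompletelyRegular S) :
    IsCompletelyRegular (etaStar S).Quotient ∧
      IsInverseSemigroup (etaStar S).Quotient := by
  have hT : IsCompletelyRegular (etaStar S).Quotient :=
    h.of_surjective (φ := (etaStar S).mkMulHom) Quotient.mk''_surjective
  refine ⟨hT, isInverseSemigroup_of_commute_idempotents (fun x => ?_)
    h.commute_idempotents_etaStar⟩
  obtain ⟨y, hxyx, -, hyxy⟩ := hT x
  exact ⟨y, hxyx, hyxy⟩
end
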